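/- Let f = 3^{e}·ℓ₁···ℓ_n be the conductor of k/k₀, with distinct primes ℓ_j ≠ 3, and set u = #{1 ≤ j ≤ n : ℓ_j ≡ ±1 (mod 9)}, v = #{1 ≤ j ≤ n : ℓ_j ≡ ±2 or ±4 (mod 9)} (so n = u + v). Then the multiplicity m(f), i.e. the number of normalized cube-free radicands d > 1 whose conductor equals f, is: m(f) = 2^n if e = 2; m(f) = 2^u · X_v if e = 1; m(f) = 2^u · X_{v−1} if e = 0; where X_r = (2^r − (−1)^r)/3 for r ≥ −1 (in particular X_{−1} = 1/2, X_0 = 0, X_1 = 1, X_2 = 1). -/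

import Mathlib

/-!
A cube-free `d` whose conductor is `3^e·ℓ₁⋯ℓₙ` has the form `3^a·∏ ℓⱼ^{kⱼ}` with `kⱼ ∈ {1, 2}`,
so it is determined by `a` and the set `T` of primes with `kⱼ = 2`. Negating every exponent mod `3`
(`d₁d₂² ↦ d₂d₁²`) is an involution on these configurations which preserves the conductor and
swaps `d₁` and `d₂`, so exactly half of the configurations of a given conductor are normalized.
For `e = 2` the configurations are those with `a ∈ {1, 2}`. For `e ≤ 1` one has `a = 0`, and the
species is decided by `d mod 9`, i.e. by the character `(ℤ/9)ˣ/{±1} ≃ ℤ/3` evaluated at `d`: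
each of the `u` primes `≡ ±1` contributes a free factor `2`, and the number `N(v)` of choices of
exponents of the other `v` primes giving trivial character satisfies `N(v + 1) = 2^v - N(v)`, whence
`3N = 2^u (2^v + 2(-1)^v)`.
-/

open IntermediateField NumberField
open scoped nonZeroDivisors

set_option synthInstance.maxHeartbeats 1000000
set_option maxHeartbeats 2000000

noncomputable section

instance : Fact (Nat.Prime 3) := ⟨by norm_num⟩

/-- A positive integer is cube-free if no prime cube divides it. -/
def IsCubeFree (d : ℕ) : Prop := ∀ p : ℕ, p.Prime → ¬ (p ^ 3 ∣ d)

/-- The conductor `f` of `k/k₀` for `k = ℚ(∛d, ζ₃)`: it equals `3^e·ℓ₁⋯ℓ_n` where the `ℓ_j`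
are the prime divisors of `d` distinct from `3`, and `e = 2` if `3 ∣ d` (species 1a),
`e = 1` if `3 ∤ d` and `d ≢ ±1 (mod 9)` (species 1b), `e = 0` if `3 ∤ d` and
`d ≡ ±1 (mod 9)` (species 2). -/
def radicandConductor (d : ℕ) : ℕ :=
  (if 3 ∣ d then 9 else if d % 9 = 1 ∨ d % 9 = 8 then 1 else 3) *
    ∏ p ∈ d.primeFactors.erase 3, p

/-- `d` is a normalized cube-free radicand: writing `d = d₁d₂²` with `d₁, d₂` squarefree and
coprime, one has `d₁ > d₂ ≥ 1`. -/
def IsNormalizedRadicand (d : ℕ) : Prop :=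
  1 < d ∧ IsCubeFree d ∧
    (∏ p ∈ d.primeFactors.filter (fun p => p ^ 2 ∣ d), p) <
      (∏ p ∈ d.primeFactors.filter (fun p => ¬ p ^ 2 ∣ d), p)

/-- The multiplicity `m(f)` of a conductor `f`: the number of (pairwise non-isomorphic)
pure cubic fields `ℚ(∛d)` with normalized radicand `d` whose conductor equals `f`. -/
def conductorMultiplicity (f : ℕ) : ℕ :=
  Nat.card {d : ℕ // IsNormalizedRadicand d ∧ radicandConductor d = f}

/-- The sequence `X_r = (2^r - (-1)^r)/3`, defined for `r ≥ -1` (so `X_{-1} = 1/2`). -/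
def Xseq (r : ℤ) : ℚ := ((2 : ℚ) ^ r - (-1 : ℚ) ^ r) / 3

open Finset

lemma Finset.two_mul_card_filter_of_involution {α : Type*} {s : Finset α} (σ : α → α)
    (p : α → Prop) [DecidablePred p] (hσ : ∀ x ∈ s, σ x ∈ s) (hσσ : ∀ x ∈ s, σ (σ x) = x)
    (hp : ∀ x ∈ s, p (σ x) ↔ ¬ p x) :
    2 * #{x ∈ s | p x} = #s := by
  have hswap : #{x ∈ s | p x} = #{x ∈ s | ¬ p x} := by
    refine card_nbij' σ σ ?_ ?_ (fun x hx => hσσ x (mem_filter.mp hx).1)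
      (fun x hx => hσσ x (mem_filter.mp hx).1) <;>
    · intro x hx
      obtain ⟨hxs, hpx⟩ := mem_filter.mp hx
      simp only [coe_filter, Set.mem_ofPred_eq, hσ x hxs, hp x hxs, true_and]
      tauto
  rw [two_mul]
  nth_rewrite 2 [hswap]
  exact card_filter_add_card_filter_not p

lemma Nat.not_three_dvd_of_prime {ℓ : ℕ} (hℓ : ℓ.Prime) (h3 : ℓ ≠ 3) : ¬ 3 ∣ ℓ := fun h =>
  h3 ((Nat.prime_dvd_prime_iff_eq Nat.prime_three hℓ).mp h).symm

lemma Nat.dvd_prod_primes_iff {s : Finset ℕ} (hs : ∀ q ∈ s, q.Prime) {p : ℕ} (hp : p.Prime) :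
    p ∣ ∏ q ∈ s, q ↔ p ∈ s := by
  refine ⟨fun h => ?_, fun h => dvd_prod_of_mem _ h⟩
  have hne : ∏ q ∈ s, q ≠ 0 := prod_ne_zero_iff.mpr fun q hq => (hs q hq).ne_zero
  simpa [Nat.primeFactors_prod hs] using Nat.mem_primeFactors.mpr ⟨hp, h, hne⟩

lemma Nat.mem_primeFactors_iff_factorization_ne_zero {n p : ℕ} :
    p ∈ n.primeFactors ↔ n.factorization p ≠ 0 := by
  rw [← Nat.support_factorization, Finsupp.mem_support_iff]

/-- The isomorphism `(ℤ/9ℤ)ˣ/{±1} ≃ ℤ/3ℤ` sending `2 ↦ 1`, read off residues mod `9`. -/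
def chi9 (n : ℕ) : ZMod 3 :=
  if n % 9 = 1 ∨ n % 9 = 8 then 0 else if n % 9 = 2 ∨ n % 9 = 7 then 1 else 2

lemma chi9_eq_zero_iff {n : ℕ} : chi9 n = 0 ↔ n % 9 = 1 ∨ n % 9 = 8 := by
  unfold chi9; split_ifs <;> simp_all [show (2 : ZMod 3) ≠ 0 by decide]

lemma chi9_ne_zero_iff {n : ℕ} (hn : ¬ 3 ∣ n) :
    chi9 n ≠ 0 ↔ n % 9 = 2 ∨ n % 9 = 4 ∨ n % 9 = 5 ∨ n % 9 = 7 := by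
  rw [Ne, chi9_eq_zero_iff]; omega

lemma chi9_mod (n : ℕ) : chi9 (n % 9) = chi9 n := by
  simp only [chi9, Nat.mod_mod]

lemma chi9_mul {m n : ℕ} (hm : ¬ 3 ∣ m) (hn : ¬ 3 ∣ n) : chi9 (m * n) = chi9 m + chi9 n := by
  have table : ∀ a < 9, ∀ b < 9, a % 3 ≠ 0 → b % 3 ≠ 0 →
      chi9 (a * b % 9) = chi9 a + chi9 b := by decide
  rw [← chi9_mod, Nat.mul_mod, table _ (Nat.mod_lt _ (by norm_num)) _ (Nat.mod_lt _ (by norm_num))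
    (by omega) (by omega), chi9_mod, chi9_mod]

lemma chi9_pow {m : ℕ} (hm : ¬ 3 ∣ m) (k : ℕ) : chi9 (m ^ k) = k * chi9 m := by
  induction k with
  | zero => simp [chi9]
  | succ k ih =>
    have hmk : ¬ 3 ∣ m ^ k := fun h => hm (Nat.prime_three.dvd_of_dvd_pow h)
    rw [pow_succ, chi9_mul hmk hm, ih]; push_cast; ring

lemma chi9_prod_pow {S : Finset ℕ} (hS : ∀ ℓ ∈ S, ¬ 3 ∣ ℓ) (k : ℕ → ℕ) :
    chi9 (∏ ℓ ∈ S, ℓ ^ k ℓ) = ∑ ℓ ∈ S, (k ℓ : ZMod 3) * chi9 ℓ := by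
  induction S using Finset.induction_on with
  | empty => simp [chi9]
  | insert a S ha ih =>
    have hS' : ∀ ℓ ∈ S, ¬ 3 ∣ ℓ := fun ℓ hℓ => hS ℓ (mem_insert_of_mem hℓ)
    have ha3 : ¬ 3 ∣ a := hS a (mem_insert_self a S)
    have hprod : ¬ 3 ∣ ∏ ℓ ∈ S, ℓ ^ k ℓ := by
      rw [Prime.dvd_finsetProd_iff Nat.prime_three.prime]
      exact fun ⟨ℓ, hℓ, h⟩ => hS' ℓ hℓ (Nat.prime_three.dvd_of_dvd_pow h)
    rw [prod_insert ha, sum_insert ha,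
      chi9_mul (fun h => ha3 (Nat.prime_three.dvd_of_dvd_pow h)) hprod, chi9_pow ha3, ih hS']

section Counting

variable {ι : Type*} [DecidableEq ι] (c : ι → ZMod 3)

def sqExp (T : Finset ι) (ℓ : ι) : ℕ := if ℓ ∈ T then 2 else 1

def weight (S T : Finset ι) : ZMod 3 := ∑ ℓ ∈ S, (sqExp T ℓ : ZMod 3) * c ℓ

def weightCount (S : Finset ι) (t : ZMod 3) : ℕ := #{T ∈ S.powerset | weight c S T = t}

lemma weight_sdiff (S T : Finset ι) : weight c S (S \ T) = -weight c S T := by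
  rw [eq_neg_iff_add_eq_zero, weight, weight, ← sum_add_distrib]
  refine sum_eq_zero fun ℓ hℓ => ?_
  have h3 : (3 : ZMod 3) = 0 := rfl
  by_cases hℓT : ℓ ∈ T <;> simp [sqExp, hℓT, hℓ] <;> linear_combination c ℓ * h3

lemma weightCount_insert {S : Finset ι} {a : ι} (ha : a ∉ S) (t : ZMod 3) :
    weightCount c (insert a S) t = weightCount c S (t - c a) + weightCount c S (t + c a) := by
  have sqExp_insert : ∀ T, ∀ ℓ ∈ S, sqExp (insert a T) ℓ = sqExp T ℓ := fun T ℓ hℓ => by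
    simp [sqExp, ne_of_mem_of_not_mem hℓ ha]
  simp only [weightCount, card_filter, sum_powerset_insert ha]
  congr 1 <;> refine sum_congr rfl fun T hT => ?_
  · have haT : a ∉ T := fun h => ha (mem_powerset.mp hT h)
    simp only [weight, sum_insert ha, sqExp, haT, if_false]
    congr 1; apply propext; constructor <;> intro h <;> linear_combination h
  · have h3 : (3 : ZMod 3) = 0 := rfl
    rw [weight, weight, sum_insert ha, sum_congr rfl (fun ℓ hℓ => by rw [sqExp_insert T ℓ hℓ])]
    simp only [sqExp, mem_insert_self, if_true]
    congr 1; apply propext; constructor <;> intro h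
    · linear_combination h - c a * h3
    · linear_combination h + c a * h3

lemma sum_weightCount (S : Finset ι) : ∑ t, weightCount c S t = 2 ^ #S := by
  rw [← card_powerset, card_eq_sum_card_fiberwise (fun T _ => mem_univ (weight c S T))]
  rfl

lemma weightCount_insert_zero_of_eq_zero {S : Finset ι} {a : ι} (ha : a ∉ S) (h : c a = 0) :
    weightCount c (insert a S) 0 = 2 * weightCount c S 0 := by
  rw [weightCount_insert c ha, h, sub_zero, add_zero, two_mul]

lemma weightCount_insert_zero_of_ne_zero {S : Finset ι} {a : ι} (ha : a ∉ S) (h : c a ≠ 0) :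
    weightCount c (insert a S) 0 + weightCount c S 0 = 2 ^ #S := by
  have sum_three : ∀ x : ZMod 3, x ≠ 0 → ∀ f : ZMod 3 → ℕ, ∑ t, f t = f 0 + f (-x) + f x := by
    intro x hx f
    rw [show ∑ t, f t = f 0 + f 1 + f 2 from Fin.sum_univ_three f]
    fin_cases x
    · exact absurd rfl hx
    · exact add_right_comm (f 0) (f 1) (f 2)
    · rfl
  rw [weightCount_insert c ha, ← sum_weightCount c S, sum_three (c a) h, zero_sub, zero_add]
  ring

lemma three_mul_weightCount_zero (S : Finset ι) :
    3 * (weightCount c S 0 : ℤ) =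
      2 ^ #{ℓ ∈ S | c ℓ = 0} * (2 ^ #{ℓ ∈ S | c ℓ ≠ 0} + 2 * (-1) ^ #{ℓ ∈ S | c ℓ ≠ 0}) := by
  induction S using Finset.induction_on with
  | empty => simp [weightCount, weight]
  | insert a S ha ih =>
    have haS : ∀ p : ι → Prop, [DecidablePred p] → a ∉ S.filter p := fun _ _ hm =>
      ha (mem_filter.mp hm).1
    rw [filter_insert, filter_insert]
    by_cases h : c a = 0
    · rw [if_pos h, if_neg (not_not.mpr h), card_insert_of_notMem (haS _),
        weightCount_insert_zero_of_eq_zero c ha h, pow_succ]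
      push_cast
      linear_combination 2 * ih
    · have hsplit := card_filter_add_card_filter_not (s := S) (p := fun ℓ => c ℓ = 0)
      have hcount := weightCount_insert_zero_of_ne_zero c ha h
      rw [if_neg h, if_pos h, card_insert_of_notMem (haS _), ← hsplit, pow_add] at *
      zify at hcount
      linear_combination 3 * hcount - ih

end Counting

section CubeFree

variable {d : ℕ}

lemma isCubeFree_iff_factorization_le_two (hd : d ≠ 0) :
    IsCubeFree d ↔ ∀ p, d.factorization p ≤ 2 := by
  refine ⟨fun h p => ?_, fun h p hp hdvd => ?_⟩
  · by_cases hp : p.Prime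
    · by_contra hlt
      exact h p hp ((hp.pow_dvd_iff_le_factorization hd).mpr (by omega))
    · simp [Nat.factorization_eq_zero_of_not_prime d hp]
  · have := (hp.pow_dvd_iff_le_factorization hd).mp hdvd
    have := h p
    omega

/-- For cube-free `d = d₁d₂²` with `d₁, d₂` squarefree and coprime, `radD₁ d = d₁`. -/
def radD₁ (d : ℕ) : ℕ := ∏ p ∈ d.primeFactors.filter (fun p => ¬ p ^ 2 ∣ d), p

/-- For cube-free `d = d₁d₂²` with `d₁, d₂` squarefree and coprime, `radD₂ d = d₂`. -/
def radD₂ (d : ℕ) : ℕ := ∏ p ∈ d.primeFactors.filter (fun p => p ^ 2 ∣ d), p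

lemma isNormalizedRadicand_iff (hd : d ≠ 0) :
    IsNormalizedRadicand d ↔ IsCubeFree d ∧ radD₂ d < radD₁ d := by
  refine ⟨fun h => h.2, fun ⟨hcf, hlt⟩ => ⟨?_, hcf, hlt⟩⟩
  by_contra hle
  obtain rfl : d = 1 := by omega
  simp [radD₁, radD₂] at hlt

lemma mem_filter_sq_dvd_iff (hd : d ≠ 0) {p : ℕ} :
    p ∈ d.primeFactors.filter (fun p => p ^ 2 ∣ d) ↔ 2 ≤ d.factorization p := by
  rw [mem_filter]
  refine ⟨fun ⟨hp, hsq⟩ => ?_, fun h => ⟨?_, ?_⟩⟩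
  · exact ((Nat.prime_of_mem_primeFactors hp).pow_dvd_iff_le_factorization hd).mp hsq
  · exact Nat.mem_primeFactors_iff_factorization_ne_zero.mpr (by omega)
  · have hp : p.Prime := Nat.prime_of_mem_primeFactors
      (Nat.mem_primeFactors_iff_factorization_ne_zero (n := d).mpr (by omega))
    exact (hp.pow_dvd_iff_le_factorization hd).mpr h

lemma mem_filter_not_sq_dvd_iff (hd : d ≠ 0) {p : ℕ} :
    p ∈ d.primeFactors.filter (fun p => ¬ p ^ 2 ∣ d) ↔ d.factorization p = 1 := by
  have := mem_filter_sq_dvd_iff hd (p := p)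
  simp only [mem_filter, Nat.mem_primeFactors_iff_factorization_ne_zero] at this ⊢
  omega

lemma radD₁_ne_radD₂ (hd : 1 < d) : radD₁ d ≠ radD₂ d := by
  obtain ⟨p, hp, hpd⟩ := Nat.exists_prime_and_dvd (show d ≠ 1 by omega)
  have primes : ∀ P : ℕ → Prop, [DecidablePred P] → ∀ q ∈ d.primeFactors.filter P, q.Prime :=
    fun _ _ q hq => Nat.prime_of_mem_primeFactors (mem_filter.mp hq).1
  have hpd' : p ∈ d.primeFactors := Nat.mem_primeFactors.mpr ⟨hp, hpd, by omega⟩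
  intro heq
  by_cases hsq : p ^ 2 ∣ d
  · have : p ∣ radD₁ d := heq ▸ dvd_prod_of_mem _ (mem_filter.mpr ⟨hpd', hsq⟩)
    exact ((mem_filter.mp ((Nat.dvd_prod_primes_iff (primes _) hp).mp this)).2) hsq
  · have : p ∣ radD₂ d := heq ▸ dvd_prod_of_mem _ (mem_filter.mpr ⟨hpd', hsq⟩)
    exact hsq (mem_filter.mp ((Nat.dvd_prod_primes_iff (primes _) hp).mp this)).2

end CubeFree

section Radicand

variable {S : Finset ℕ} (hS : ∀ ℓ ∈ S, ℓ.Prime ∧ ℓ ≠ 3)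

def mkRadicand (S : Finset ℕ) (a : ℕ) (T : Finset ℕ) : ℕ := 3 ^ a * ∏ ℓ ∈ S, ℓ ^ sqExp T ℓ

include hS

lemma mkRadicand_ne_zero (a : ℕ) (T : Finset ℕ) : mkRadicand S a T ≠ 0 :=
  mul_ne_zero (pow_ne_zero _ three_ne_zero)
    (prod_ne_zero_iff.mpr fun ℓ hℓ => pow_ne_zero _ (hS ℓ hℓ).1.ne_zero)

lemma factorization_mkRadicand (a : ℕ) (T : Finset ℕ) (q : ℕ) :
    (mkRadicand S a T).factorization q =
      (if q = 3 then a else 0) + (if q ∈ S then sqExp T q else 0) := by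
  have hprod : ∀ ℓ ∈ S, ℓ ^ sqExp T ℓ ≠ 0 := fun ℓ hℓ => pow_ne_zero _ (hS ℓ hℓ).1.ne_zero
  rw [mkRadicand, Nat.factorization_mul (pow_ne_zero _ three_ne_zero) (prod_ne_zero_iff.mpr hprod),
    Nat.factorization_prod hprod, Nat.prime_three.factorization_pow,
    sum_congr rfl fun ℓ hℓ => (hS ℓ hℓ).1.factorization_pow]
  simp [Finsupp.single_apply, eq_comm]

lemma factorization_mkRadicand_three (a : ℕ) (T : Finset ℕ) :
    (mkRadicand S a T).factorization 3 = a := by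
  have h3S : 3 ∉ S := fun h => (hS 3 h).2 rfl
  simp [factorization_mkRadicand hS, h3S]

lemma factorization_mkRadicand_of_ne_three (a : ℕ) (T : Finset ℕ) {q : ℕ} (hq : q ≠ 3) :
    (mkRadicand S a T).factorization q = if q ∈ S then sqExp T q else 0 := by
  simp [factorization_mkRadicand hS, hq]

lemma mkRadicand_injOn :
    Set.InjOn (fun c : ℕ × Finset ℕ => mkRadicand S c.1 c.2) {c | c.2 ⊆ S} := by
  rintro ⟨a, T⟩ hT ⟨a', T'⟩ hT' h
  have hfac := congrArg Nat.factorization h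
  simp only at hfac
  refine Prod.ext ?_ (Finset.ext fun ℓ => ?_)
  · simpa only [factorization_mkRadicand_three hS] using DFunLike.congr_fun hfac 3
  · by_cases hℓ : ℓ ∈ S
    · have := DFunLike.congr_fun hfac ℓ
      simp only [factorization_mkRadicand_of_ne_three hS _ _ (hS ℓ hℓ).2, hℓ, if_true,
        sqExp] at this
      split_ifs at this <;> simp_all
    · exact iff_of_false (fun h => hℓ (hT h)) (fun h => hℓ (hT' h))

lemma isCubeFree_mkRadicand {a : ℕ} (ha : a ≤ 2) (T : Finset ℕ) :
    IsCubeFree (mkRadicand S a T) := by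
  rw [isCubeFree_iff_factorization_le_two (mkRadicand_ne_zero hS a T)]
  intro q
  by_cases hq : q = 3
  · rwa [hq, factorization_mkRadicand_three hS]
  · rw [factorization_mkRadicand_of_ne_three hS _ _ hq, sqExp]
    split_ifs <;> omega

lemma primeFactors_mkRadicand_erase_three (a : ℕ) (T : Finset ℕ) :
    (mkRadicand S a T).primeFactors.erase 3 = S := by
  ext q
  rw [mem_erase, Nat.mem_primeFactors_iff_factorization_ne_zero]
  by_cases hq : q = 3
  · simp only [hq, ne_eq, not_true_eq_false, false_and, false_iff]
    exact fun h => (hS 3 h).2 rfl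
  · rw [factorization_mkRadicand_of_ne_three hS _ _ hq, sqExp]
    split_ifs <;> simp_all

lemma three_dvd_mkRadicand_iff (a : ℕ) (T : Finset ℕ) : 3 ∣ mkRadicand S a T ↔ a ≠ 0 := by
  rw [Nat.prime_three.dvd_iff_one_le_factorization (mkRadicand_ne_zero hS a T),
    factorization_mkRadicand_three hS]
  omega

lemma radicandConductor_mkRadicand (a : ℕ) (T : Finset ℕ) :
    radicandConductor (mkRadicand S a T) =
      (if a = 0 then if weight chi9 S T = 0 then 1 else 3 else 9) * ∏ ℓ ∈ S, ℓ := by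
  simp only [radicandConductor, primeFactors_mkRadicand_erase_three hS,
    three_dvd_mkRadicand_iff hS]
  rcases eq_or_ne a 0 with rfl | ha
  · have hchi : chi9 (mkRadicand S 0 T) = weight chi9 S T := by
      rw [mkRadicand, pow_zero, one_mul,
        chi9_prod_pow fun ℓ hℓ => Nat.not_three_dvd_of_prime (hS ℓ hℓ).1 (hS ℓ hℓ).2]
      rfl
    simp only [ne_eq, not_true_eq_false, if_false, if_true, ← chi9_eq_zero_iff, hchi]
  · simp [ha]

lemma radD₂_mkRadicand {T : Finset ℕ} (hT : T ⊆ S) {a : ℕ} (ha : a ≤ 2) :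
    radD₂ (mkRadicand S a T) = (if a = 2 then 3 else 1) * ∏ ℓ ∈ T, ℓ := by
  have h3T : 3 ∉ T := fun h => (hS 3 (hT h)).2 rfl
  have hfilter : (mkRadicand S a T).primeFactors.filter (fun p => p ^ 2 ∣ mkRadicand S a T) =
      if a = 2 then insert 3 T else T := by
    ext q
    rw [mem_filter_sq_dvd_iff (mkRadicand_ne_zero hS a T)]
    by_cases hq : q = 3
    · subst hq
      rw [factorization_mkRadicand_three hS]
      split_ifs <;> simp [h3T] <;> omega
    · rw [factorization_mkRadicand_of_ne_three hS _ _ hq, sqExp]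
      have := @hT q
      split_ifs <;> simp_all
  rw [radD₂, hfilter]
  split_ifs
  · rw [prod_insert h3T]
  · rw [one_mul]

lemma radD₁_mkRadicand (a : ℕ) (T : Finset ℕ) :
    radD₁ (mkRadicand S a T) = (if a = 1 then 3 else 1) * ∏ ℓ ∈ S \ T, ℓ := by
  have h3ST : 3 ∉ S \ T := fun h => (hS 3 (mem_sdiff.mp h).1).2 rfl
  have hfilter : (mkRadicand S a T).primeFactors.filter (fun p => ¬ p ^ 2 ∣ mkRadicand S a T) =
      if a = 1 then insert 3 (S \ T) else S \ T := by
    ext q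
    rw [mem_filter_not_sq_dvd_iff (mkRadicand_ne_zero hS a T)]
    by_cases hq : q = 3
    · subst hq
      rw [factorization_mkRadicand_three hS]
      split_ifs <;> simp [h3ST] <;> omega
    · rw [factorization_mkRadicand_of_ne_three hS _ _ hq, sqExp]
      split_ifs <;> simp_all
  rw [radD₁, hfilter]
  split_ifs
  · rw [prod_insert h3ST]
  · rw [one_mul]

end Radicand

section Configurations

variable {S : Finset ℕ} (hS : ∀ ℓ ∈ S, ℓ.Prime ∧ ℓ ≠ 3)

def radicandConfigs (S : Finset ℕ) : Finset (ℕ × Finset ℕ) := range 3 ×ˢ S.powerset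

/-- On radicands this is `d₁d₂² ↦ d₂d₁²`: every exponent is negated mod `3`. -/
def swapConfig (S : Finset ℕ) (c : ℕ × Finset ℕ) : ℕ × Finset ℕ := ((3 - c.1) % 3, S \ c.2)

lemma mem_radicandConfigs {c : ℕ × Finset ℕ} : c ∈ radicandConfigs S ↔ c.1 < 3 ∧ c.2 ⊆ S := by
  simp [radicandConfigs]

lemma swapConfig_mem {c : ℕ × Finset ℕ} : swapConfig S c ∈ radicandConfigs S :=
  mem_radicandConfigs.mpr ⟨Nat.mod_lt _ (by norm_num), sdiff_subset⟩

lemma swapConfig_swapConfig {c : ℕ × Finset ℕ} (hc : c ∈ radicandConfigs S) :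
    swapConfig S (swapConfig S c) = c := by
  obtain ⟨ha, hT⟩ := mem_radicandConfigs.mp hc
  exact Prod.ext (by simp only [swapConfig]; omega) (Finset.sdiff_sdiff_eq_self hT)

include hS

lemma radicandConductor_mkRadicand_swapConfig {c : ℕ × Finset ℕ} (hc : c ∈ radicandConfigs S) :
    radicandConductor (mkRadicand S (swapConfig S c).1 (swapConfig S c).2) =
      radicandConductor (mkRadicand S c.1 c.2) := by
  obtain ⟨a, T⟩ := c
  have ha : (3 - a) % 3 = 0 ↔ a = 0 := by have := (mem_radicandConfigs.mp hc).1; omega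
  simp only [swapConfig, radicandConductor_mkRadicand hS, weight_sdiff, neg_eq_zero, ha]

lemma isNormalizedRadicand_mkRadicand_swapConfig {c : ℕ × Finset ℕ}
    (hc : c ∈ radicandConfigs S) (h : 1 < mkRadicand S c.1 c.2) :
    IsNormalizedRadicand (mkRadicand S (swapConfig S c).1 (swapConfig S c).2) ↔
      ¬ IsNormalizedRadicand (mkRadicand S c.1 c.2) := by
  obtain ⟨a, T⟩ := c
  obtain ⟨ha, hT⟩ : a < 3 ∧ T ⊆ S := mem_radicandConfigs.mp hc
  dsimp only [swapConfig] at h ⊢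
  have hne := radD₁_ne_radD₂ h
  rw [radD₁_mkRadicand hS, radD₂_mkRadicand hS hT (by omega)] at hne
  rw [isNormalizedRadicand_iff (mkRadicand_ne_zero hS _ _),
    isNormalizedRadicand_iff (mkRadicand_ne_zero hS _ _),
    and_iff_right (isCubeFree_mkRadicand hS (by omega) _),
    and_iff_right (isCubeFree_mkRadicand hS (by omega) _), not_lt,
    radD₁_mkRadicand hS, radD₂_mkRadicand hS sdiff_subset (by omega),
    Finset.sdiff_sdiff_eq_self hT, radD₁_mkRadicand hS, radD₂_mkRadicand hS hT (by omega)]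
  have h1 : (3 - a) % 3 = 1 ↔ a = 2 := by omega
  have h2 : (3 - a) % 3 = 2 ↔ a = 1 := by omega
  simp only [h1, h2]
  omega

end Configurations

section Multiplicity

variable {S : Finset ℕ} (hS : ∀ ℓ ∈ S, ℓ.Prime ∧ ℓ ≠ 3)
include hS

lemma not_three_dvd_prod : ¬ 3 ∣ ∏ ℓ ∈ S, ℓ := fun h =>
  (hS 3 ((Nat.dvd_prod_primes_iff (fun ℓ hℓ => (hS ℓ hℓ).1) Nat.prime_three).mp h)).2 rfl

lemma primeFactors_erase_three_of_radicandConductor_eq {e d : ℕ} (he : e ≤ 2)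
    (h : radicandConductor d = 3 ^ e * ∏ ℓ ∈ S, ℓ) : d.primeFactors.erase 3 = S := by
  have hE : ∀ p ∈ d.primeFactors.erase 3, p.Prime ∧ p ≠ 3 := fun p hp =>
    ⟨Nat.prime_of_mem_primeFactors (mem_of_mem_erase hp), ne_of_mem_erase hp⟩
  have hprod : ∏ p ∈ d.primeFactors.erase 3, p = ∏ ℓ ∈ S, ℓ := by
    have h₁ := not_three_dvd_prod hE
    have h₂ := not_three_dvd_prod hS
    rw [radicandConductor] at h
    split_ifs at h <;> interval_cases e <;> omega
  rw [← Nat.primeFactors_prod fun p hp => (hE p hp).1, hprod,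
    Nat.primeFactors_prod fun ℓ hℓ => (hS ℓ hℓ).1]

lemma exists_mkRadicand_eq {d : ℕ} (hd : d ≠ 0) (hcf : IsCubeFree d)
    (hE : d.primeFactors.erase 3 = S) :
    ∃ c ∈ radicandConfigs S, mkRadicand S c.1 c.2 = d := by
  have hle := (isCubeFree_iff_factorization_le_two hd).mp hcf
  refine ⟨(d.factorization 3, {ℓ ∈ S | 2 ≤ d.factorization ℓ}),
    mem_radicandConfigs.mpr ⟨by have := hle 3; omega, filter_subset _ _⟩,
    Nat.eq_of_factorization_eq (mkRadicand_ne_zero hS _ _) hd fun q => ?_⟩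
  by_cases hq : q = 3
  · rw [hq, factorization_mkRadicand_three hS]
  · have hqS : q ∈ S ↔ d.factorization q ≠ 0 := by
      rw [← hE, mem_erase, Nat.mem_primeFactors_iff_factorization_ne_zero, and_iff_right hq]
    rw [factorization_mkRadicand_of_ne_three hS _ _ hq]
    by_cases hqS' : q ∈ S
    · have := hle q
      have := hqS.mp hqS'
      simp only [sqExp, mem_filter, hqS', true_and, if_true]
      split_ifs <;> omega
    · simp only [hqS', if_false]
      exact (not_not.mp (mt hqS.mpr hqS')).symm

lemma three_pow_mul_prod_ne_one {e : ℕ} (h : e ≠ 0 ∨ S.Nonempty) : 3 ^ e * ∏ ℓ ∈ S, ℓ ≠ 1 := by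
  intro h1
  rcases h with he | ⟨ℓ, hℓ⟩
  · exact Nat.prime_three.one_lt.ne'
      (Nat.dvd_one.mp (h1 ▸ dvd_mul_of_dvd_left (dvd_pow_self 3 he) _))
  · exact (hS ℓ hℓ).1.one_lt.ne'
      (Nat.dvd_one.mp (h1 ▸ dvd_mul_of_dvd_right (dvd_prod_of_mem _ hℓ) _))

lemma two_mul_conductorMultiplicity {e : ℕ} (he : e ≤ 2) (h : e ≠ 0 ∨ S.Nonempty) :
    2 * conductorMultiplicity (3 ^ e * ∏ ℓ ∈ S, ℓ) =
      #{c ∈ radicandConfigs S | radicandConductor (mkRadicand S c.1 c.2) = 3 ^ e * ∏ ℓ ∈ S, ℓ} := by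
  classical
  set f := 3 ^ e * ∏ ℓ ∈ S, ℓ
  set A := {c ∈ radicandConfigs S | radicandConductor (mkRadicand S c.1 c.2) = f}
  have hA : ∀ {c}, c ∈ A ↔ c ∈ radicandConfigs S ∧ radicandConductor (mkRadicand S c.1 c.2) = f :=
    mem_filter
  have hm : conductorMultiplicity f = #{c ∈ A | IsNormalizedRadicand (mkRadicand S c.1 c.2)} := by
    rw [← card_image_of_injOn ((mkRadicand_injOn hS).mono fun c hc =>
      (mem_radicandConfigs.mp (hA.mp (mem_filter.mp hc).1).1).2), conductorMultiplicity,
      ← Nat.card_eq_finsetCard]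
    refine Nat.card_congr (Equiv.subtypeEquivRight fun d => ⟨fun ⟨hd, hcond⟩ => ?_, fun hd => ?_⟩)
    · obtain ⟨c, hc, rfl⟩ := exists_mkRadicand_eq hS (by have := hd.1; omega) hd.2.1
        (primeFactors_erase_three_of_radicandConductor_eq hS he hcond)
      exact mem_image.mpr ⟨c, mem_filter.mpr ⟨hA.mpr ⟨hc, hcond⟩, hd⟩, rfl⟩
    · obtain ⟨c, hc, rfl⟩ := mem_image.mp hd
      exact ⟨(mem_filter.mp hc).2, (hA.mp (mem_filter.mp hc).1).2⟩
  rw [hm]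
  refine two_mul_card_filter_of_involution (swapConfig S) _ (fun c hc => ?_)
    (fun c hc => swapConfig_swapConfig (hA.mp hc).1) (fun c hc => ?_)
  · obtain ⟨hc, hcond⟩ := hA.mp hc
    exact hA.mpr ⟨swapConfig_mem, (radicandConductor_mkRadicand_swapConfig hS hc).trans hcond⟩
  · obtain ⟨hc, hcond⟩ := hA.mp hc
    have hne1 : mkRadicand S c.1 c.2 ≠ 1 := fun h1 => three_pow_mul_prod_ne_one hS h
      (hcond.symm.trans (by simp [h1, radicandConductor]))
    exact isNormalizedRadicand_mkRadicand_swapConfig hS hc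
      (by have := mkRadicand_ne_zero hS c.1 c.2; omega)

end Multiplicity

section Species

variable {S : Finset ℕ} (hS : ∀ ℓ ∈ S, ℓ.Prime ∧ ℓ ≠ 3)
include hS

lemma radicandConductor_mkRadicand_eq_iff (a : ℕ) (T : Finset ℕ) (e : ℕ) :
    radicandConductor (mkRadicand S a T) = 3 ^ e * ∏ ℓ ∈ S, ℓ ↔
      (if a = 0 then if weight chi9 S T = 0 then 1 else 3 else 9) = 3 ^ e := by
  rw [radicandConductor_mkRadicand hS,
    Nat.mul_left_inj (prod_ne_zero_iff.mpr fun ℓ hℓ => (hS ℓ hℓ).1.ne_zero)]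

lemma card_configs_conductor_eq_nine_mul :
    #{c ∈ radicandConfigs S | radicandConductor (mkRadicand S c.1 c.2) = 3 ^ 2 * ∏ ℓ ∈ S, ℓ} =
      2 * 2 ^ #S := by
  rw [filter_congr (q := fun c => c.1 ≠ 0) fun c _ => by
      rw [radicandConductor_mkRadicand_eq_iff hS]; split_ifs <;> simp_all, radicandConfigs]
  simp only [filter_product_left (fun a => a ≠ 0), card_product, card_powerset]
  rfl

lemma card_configs_conductor_eq_three_mul :
    #{c ∈ radicandConfigs S | radicandConductor (mkRadicand S c.1 c.2) = 3 ^ 1 * ∏ ℓ ∈ S, ℓ} =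
      #{T ∈ S.powerset | weight chi9 S T ≠ 0} := by
  rw [filter_congr (q := fun c => c.1 = 0 ∧ weight chi9 S c.2 ≠ 0) fun c _ => by
      rw [radicandConductor_mkRadicand_eq_iff hS]; split_ifs <;> simp_all,
    radicandConfigs, filter_product (fun a => a = 0) (fun T => weight chi9 S T ≠ 0), card_product]
  exact one_mul _

lemma card_configs_conductor_eq_prod :
    #{c ∈ radicandConfigs S | radicandConductor (mkRadicand S c.1 c.2) = 3 ^ 0 * ∏ ℓ ∈ S, ℓ} =
      weightCount chi9 S 0 := by
  rw [filter_congr (q := fun c => c.1 = 0 ∧ weight chi9 S c.2 = 0) fun c _ => by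
      rw [radicandConductor_mkRadicand_eq_iff hS]; split_ifs <;> simp_all,
    radicandConfigs, filter_product (fun a => a = 0) (fun T => weight chi9 S T = 0), card_product]
  exact one_mul _

end Species

lemma Xseq_natCast (v : ℕ) : Xseq v = (2 ^ v - (-1) ^ v) / 3 := by
  rw [Xseq, zpow_natCast, zpow_natCast]

lemma Xseq_natCast_sub_one (v : ℕ) : Xseq (v - 1) = (2 ^ v / 2 + (-1) ^ v) / 3 := by
  rw [Xseq, zpow_sub_one₀ two_ne_zero, zpow_sub_one₀ (neg_ne_zero.mpr one_ne_zero), zpow_natCast,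
    zpow_natCast]
  ring

/-- **Theorem 2.3** (multiplicity of conductors): if `f = 3^e·ℓ₁⋯ℓ_n` with distinct primes
`ℓ_j ≠ 3`, `u` of which are `≡ ±1 (mod 9)` and `v` of which are `≡ ±2, ±4 (mod 9)`
(`n = u + v`), then `m(f) = 2^n` if `e = 2`, `m(f) = 2^u·X_v` if `e = 1`, and
`m(f) = 2^u·X_{v-1}` if `e = 0`. -/
theorem multiplicity_of_conductor
    (e n : ℕ) (he : e ≤ 2) (S : Finset ℕ) (hcard : S.card = n)
    (hprime : ∀ ℓ ∈ S, ℓ.Prime ∧ ℓ ≠ 3)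
    (hn : e = 0 → 1 ≤ n)
    (f : ℕ) (hf : f = 3 ^ e * ∏ ℓ ∈ S, ℓ)
    (u v : ℕ)
    (hu : u = (S.filter (fun ℓ => ℓ % 9 = 1 ∨ ℓ % 9 = 8)).card)
    (hv : v = (S.filter (fun ℓ =>
      ℓ % 9 = 2 ∨ ℓ % 9 = 4 ∨ ℓ % 9 = 5 ∨ ℓ % 9 = 7)).card) :
    (e = 2 → (conductorMultiplicity f : ℚ) = 2 ^ n) ∧
    (e = 1 → (conductorMultiplicity f : ℚ) = 2 ^ u * Xseq (v : ℤ)) ∧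
    (e = 0 → (conductorMultiplicity f : ℚ) = 2 ^ u * Xseq ((v : ℤ) - 1)) := by
  have hnontrivial : e ≠ 0 ∨ S.Nonempty := by
    by_cases he0 : e = 0
    · exact Or.inr (card_pos.mp (hcard ▸ hn he0))
    · exact Or.inl he0
  have h2m := two_mul_conductorMultiplicity hprime he hnontrivial
  have hu' : #{ℓ ∈ S | chi9 ℓ = 0} = u :=
    hu ▸ congrArg card (filter_congr fun _ _ => chi9_eq_zero_iff)
  have hv' : #{ℓ ∈ S | chi9 ℓ ≠ 0} = v := hv ▸ congrArg card (filter_congr fun ℓ hℓ =>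
    chi9_ne_zero_iff (Nat.not_three_dvd_of_prime (hprime ℓ hℓ).1 (hprime ℓ hℓ).2))
  have hN0 := three_mul_weightCount_zero chi9 S
  rw [hu', hv'] at hN0
  have hsplit :
      weightCount chi9 S 0 + #{T ∈ S.powerset | weight chi9 S T ≠ 0} = 2 ^ u * 2 ^ v := by
    rw [← pow_add, weightCount, card_filter_add_card_filter_not, card_powerset, ← hu', ← hv',
      card_filter_add_card_filter_not]
  refine ⟨fun h => ?_, fun h => ?_, fun h => ?_⟩ <;> subst h <;> subst hf
  · rw [card_configs_conductor_eq_nine_mul hprime, hcard] at h2m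
    exact_mod_cast (by omega : conductorMultiplicity (3 ^ 2 * ∏ ℓ ∈ S, ℓ) = 2 ^ n)
  · rw [card_configs_conductor_eq_three_mul hprime] at h2m
    rw [Xseq_natCast]
    qify at h2m hsplit hN0
    linear_combination (1 / 2 : ℚ) * h2m + (1 / 2 : ℚ) * hsplit - (1 / 6 : ℚ) * hN0
  · rw [card_configs_conductor_eq_prod hprime] at h2m
    rw [Xseq_natCast_sub_one]
    qify at h2m hN0
    linear_combination (1 / 2 : ℚ) * h2m + (1 / 6 : ℚ) * hN0

end
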